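/- arXiv:2105.14146 — 2 statements merged into one kernel-verified Lean document; each statement's English description precedes it below -/
import Mathlib

section
/- For any partition of N points (belonging to T protected groups with sizes |G_1|,...,|G_T|) into K clusters where every cluster has positive counts for every group, the overall balance min_k [(min_t N_k^t)/(max_t N_k^t)] is at most |G_min|/|G_max|, where G_min and G_max are the smallest and largest protected groups in the whole dataset. -/
/-- Number of points of cluster `k` belonging to group `t`. -/
def clusterGroupCount {n K T : ℕ} (c : Fin n → Fin K) (g : Fin n → Fin T)
    (k : Fin K) (t : Fin T) : ℕ :=
  (Finset.univ.filter fun i => c i = k ∧ g i = t).card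

/-- Size of protected group `t` in the whole dataset. -/
def groupSize {n T : ℕ} (g : Fin n → Fin T) (t : Fin T) : ℕ :=
  (Finset.univ.filter fun i => g i = t).card

/-- Balance of cluster `k`: smallest group count over largest group count. -/
noncomputable def clusterBalance {n K T : ℕ} (c : Fin n → Fin (K + 1))
    (g : Fin n → Fin (T + 1)) (k : Fin (K + 1)) : ℝ :=
  ((Finset.univ.inf' Finset.univ_nonempty (clusterGroupCount c g k) : ℕ) : ℝ) /
    ((Finset.univ.sup' Finset.univ_nonempty (clusterGroupCount c g k) : ℕ) : ℝ)

/-- Overall balance of a clustering: the minimum balance over clusters. -/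
noncomputable def overallBalance {n K T : ℕ} (c : Fin n → Fin (K + 1))
    (g : Fin n → Fin (T + 1)) : ℝ :=
  Finset.univ.inf' Finset.univ_nonempty (clusterBalance c g)

/-- For any clustering where every cluster has positive counts for every
group, the overall balance is at most `|G_min| / |G_max|`. -/
theorem overall_balance_le_group_ratio
    {n K T : ℕ} (g : Fin n → Fin (T + 1)) (c : Fin n → Fin (K + 1))
    (hpos : ∀ k t, 0 < clusterGroupCount c g k t) :
    overallBalance c g ≤
      ((Finset.univ.inf' Finset.univ_nonempty (groupSize g) : ℕ) : ℝ) /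
        ((Finset.univ.sup' Finset.univ_nonempty (groupSize g) : ℕ) : ℝ) := by
  classical
  -- groupSize is the sum over clusters
  have hsum : ∀ t, groupSize g t = ∑ k : Fin (K + 1), clusterGroupCount c g k t := by
    intro t
    unfold groupSize clusterGroupCount
    rw [Finset.card_eq_sum_card_fiberwise (f := c) (t := Finset.univ)
      (fun x _ => Finset.mem_univ _)]
    refine Finset.sum_congr rfl fun k _ => ?_
    congr 1
    ext i
    simp [Finset.mem_filter, and_comm]
  -- pick argmin and argmax groups
  obtain ⟨tmin, -, hmin⟩ := Finset.exists_mem_eq_inf' (Finset.univ_nonempty) (groupSize g)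
  obtain ⟨tmax, -, hmax⟩ := Finset.exists_mem_eq_sup' (Finset.univ_nonempty) (groupSize g)
  set a := fun k => clusterGroupCount c g k tmin with ha
  set b := fun k => clusterGroupCount c g k tmax with hb
  set A := groupSize g tmin with hA
  set B := groupSize g tmax with hB
  have hAs : A = ∑ k, a k := hsum tmin
  have hBs : B = ∑ k, b k := hsum tmax
  -- mediant: some cluster k has a k * B ≤ b k * A
  have ⟨k, hk⟩ : ∃ k, a k * B ≤ b k * A := by
    by_contra h
    push_neg at h
    have := Finset.sum_lt_sum_of_nonempty Finset.univ_nonempty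
      (fun k _ => h k)
    rw [← Finset.sum_mul, ← Finset.sum_mul, ← hAs, ← hBs, Nat.mul_comm] at this
    exact lt_irrefl _ this
  have hBpos : 0 < B := by
    rw [hBs]
    exact lt_of_lt_of_le (hpos k tmax) (Finset.single_le_sum (f := b)
      (fun _ _ => Nat.zero_le _) (Finset.mem_univ k))
  -- bound via cluster k
  have h1 : overallBalance c g ≤ clusterBalance c g k :=
    Finset.inf'_le _ (Finset.mem_univ k)
  refine h1.trans ?_
  unfold clusterBalance
  set I := Finset.univ.inf' Finset.univ_nonempty (clusterGroupCount c g k) with hI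
  set S := Finset.univ.sup' Finset.univ_nonempty (clusterGroupCount c g k) with hS
  have hIa : I ≤ a k := Finset.inf'_le _ (Finset.mem_univ tmin)
  have hbS : b k ≤ S := Finset.le_sup' (clusterGroupCount c g k) (Finset.mem_univ tmax)
  have hSpos : 0 < S := lt_of_lt_of_le (hpos k tmax) hbS
  rw [hmin, hmax]
  rw [div_le_div_iff₀ (by exact_mod_cast hSpos) (by exact_mod_cast hBpos)]
  have : I * B ≤ A * S := by
    have h2 : I * B ≤ b k * A := le_trans (Nat.mul_le_mul_right _ hIa) hk
    have h3 : b k * A ≤ S * A := Nat.mul_le_mul_right _ hbS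
    exact (h2.trans h3).trans_eq (Nat.mul_comm S A)
  exact_mod_cast this
end

section
/- (Ghouila-Houri criterion, one direction) Let C be a matrix with entries in {−1, 0, 1}. If every subset R of rows of C can be partitioned into two parts A and B such that the vector (Σ_{rows in A}) − (Σ_{rows in B}) has all entries in {−1, 0, 1}, then C is totally unimodular. -/
/-- Auxiliary: if a vector `w` satisfies `w ᵥ* B = 0` (written with explicit sums) and
`B` has nonzero determinant over `ℤ`, then `w = 0`. -/
lemma ghouilaHouri_aux_cancel {k : ℕ} (B : Matrix (Fin k) (Fin k) ℤ) (hd : B.det ≠ 0)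
    (w : Fin k → ℤ) (h : ∀ j, ∑ i, w i * B i j = 0) (i0 : Fin k) : w i0 = 0 := by
  have hBA : ∀ i i', ∑ j, B i j * B.adjugate j i' = B.det * (if i = i' then 1 else 0) := by
    intro i i'
    have := congrFun (congrFun (Matrix.mul_adjugate B) i) i'
    simpa [Matrix.mul_apply, Matrix.one_apply] using this
  have key : ∑ j, (∑ i, w i * B i j) * B.adjugate j i0 = w i0 * B.det := by
    calc ∑ j, (∑ i, w i * B i j) * B.adjugate j i0
        = ∑ j, ∑ i, w i * (B i j * B.adjugate j i0) := by
          refine Finset.sum_congr rfl fun j _ => ?_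
          rw [Finset.sum_mul]
          exact Finset.sum_congr rfl fun i _ => by ring
      _ = ∑ i, ∑ j, w i * (B i j * B.adjugate j i0) := Finset.sum_comm
      _ = ∑ i, w i * (B.det * (if i = i0 then 1 else 0)) := by
          refine Finset.sum_congr rfl fun i _ => ?_
          rw [← Finset.mul_sum, hBA]
      _ = w i0 * B.det := by
          rw [Finset.sum_eq_single i0]
          · simp
          · intro b _ hb; simp [hb]
          · intro hb; exact absurd (Finset.mem_univ i0) hb
  have h0 : ∑ j, (∑ i, w i * B i j) * B.adjugate j i0 = 0 := by
    refine Finset.sum_eq_zero fun j _ => ?_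
    rw [h j, zero_mul]
  rw [key] at h0
  exact (mul_eq_zero.mp h0).resolve_right hd

/-- Ghouila-Houri, sufficiency: if every subset `R` of the rows of a
`{-1,0,1}` matrix `C` can be partitioned into parts `A` and `R \ A` such that the row
vector `(Σ_{i ∈ A} C i) - (Σ_{i ∈ R \ A} C i)` has all entries in `{-1,0,1}`,
then `C` is totally unimodular. -/
theorem totallyUnimodular_of_ghouilaHouri
    {m n : ℕ} (C : Matrix (Fin m) (Fin n) ℤ)
    (hentries : ∀ i j, C i j = -1 ∨ C i j = 0 ∨ C i j = 1)
    (hGH : ∀ R : Finset (Fin m), ∃ A ⊆ R, ∀ j,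
      (∑ i ∈ A, C i j) - (∑ i ∈ R \ A, C i j) = -1 ∨
      (∑ i ∈ A, C i j) - (∑ i ∈ R \ A, C i j) = 0 ∨
      (∑ i ∈ A, C i j) - (∑ i ∈ R \ A, C i j) = 1) :
    ∀ (k : ℕ) (r : Fin k → Fin m) (c : Fin k → Fin n),
      Function.Injective r → Function.Injective c →
      (C.submatrix r c).det = -1 ∨ (C.submatrix r c).det = 0 ∨
        (C.submatrix r c).det = 1 := by
  intro k
  induction k using Nat.strong_induction_on with
  | _ k IH =>
  intro r c hr hc
  match k, r, c, hr, hc, IH with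
  | 0, r, c, hr, hc, IH =>
    right; right
    simp [Matrix.det_fin_zero]
  | (l+1), r, c, hr, hc, IH =>
    set B : Matrix (Fin (l+1)) (Fin (l+1)) ℤ := C.submatrix r c with hB
    by_cases hdet : B.det = 0
    · right; left; exact hdet
    -- the cofactor vector x
    set x : Fin (l+1) → ℤ := fun i => B.adjugate 0 i with hxdef
    have hxmem : ∀ i, x i = -1 ∨ x i = 0 ∨ x i = 1 := by
      intro i
      have hadj : x i = (B.updateRow i (Pi.single 0 1)).det := Matrix.adjugate_apply B 0 i
      rw [Matrix.det_succ_row _ i] at hadj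
      have hsub : ((B.updateRow i (Pi.single 0 1)).submatrix
          i.succAbove (Fin.succAbove 0)) =
          C.submatrix (r ∘ i.succAbove) (c ∘ (Fin.succAbove 0)) := by
        ext a b
        have hne : i.succAbove a ≠ i := Fin.succAbove_ne i a
        simp [Matrix.submatrix_apply, Matrix.updateRow_apply, hne, hB]
      rw [Finset.sum_eq_single (0 : Fin (l+1))] at hadj
      · have hminor := IH l (Nat.lt_succ_self l) (r ∘ i.succAbove) (c ∘ (Fin.succAbove 0))
          (hr.comp Fin.succAbove_right_injective) (hc.comp Fin.succAbove_right_injective)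
        rw [← hsub] at hminor
        have hsingle : (B.updateRow i (Pi.single 0 1)) i 0 = 1 := by
          simp [Matrix.updateRow_apply]
        rw [hsingle] at hadj
        rcases Int.even_or_odd (i : ℕ) with he | ho
        · rw [Even.neg_one_pow (by simpa using he)] at hadj
          rcases hminor with h | h | h <;> rw [h] at hadj <;> simp at hadj <;> omega
        · rw [Odd.neg_one_pow (by simpa using ho)] at hadj
          rcases hminor with h | h | h <;> rw [h] at hadj <;> simp at hadj <;> omega
      · intro b _ hb
        have : (B.updateRow i (Pi.single 0 1)) i b = 0 := by
          simp [Matrix.updateRow_apply, Pi.single_apply, hb]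
        rw [this]; ring
      · intro hb; exact absurd (Finset.mem_univ _) hb
    -- x ᵥ* B = det B • e₀
    have hxB : ∀ j, ∑ i, x i * B i j = B.det * (if j = 0 then 1 else 0) := by
      intro j
      have := congrFun (congrFun (Matrix.adjugate_mul B) 0) j
      simp only [Matrix.mul_apply, Matrix.smul_apply, Matrix.one_apply, smul_eq_mul] at this
      rw [hxdef]
      simp only [this]
      by_cases h : j = 0 <;> simp [h, eq_comm]
    -- the support of x
    set R : Finset (Fin (l+1)) := Finset.univ.filter (fun i => x i ≠ 0) with hRdef
    have hxR : ∀ j, ∑ i ∈ R, x i * B i j = B.det * (if j = 0 then 1 else 0) := by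
      intro j
      rw [← hxB j]
      refine Finset.sum_subset (Finset.subset_univ R) fun i _ hiR => ?_
      have : x i = 0 := by
        by_contra hxi
        exact hiR (Finset.mem_filter.mpr ⟨Finset.mem_univ i, hxi⟩)
      rw [this, zero_mul]
    -- apply Ghouila-Houri to the image of R
    obtain ⟨A', hA'sub, hA'⟩ := hGH (R.image r)
    set A : Finset (Fin (l+1)) := R.filter (fun i => r i ∈ A') with hAdef
    have hAsub : A ⊆ R := Finset.filter_subset _ _
    have himA : A.image r = A' := by
      ext a
      constructor
      · intro ha
        obtain ⟨i, hiA, hia⟩ := Finset.mem_image.mp ha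
        obtain ⟨_, hiA'⟩ := Finset.mem_filter.mp hiA
        rwa [hia] at hiA'
      · intro ha
        obtain ⟨i, hiR, hia⟩ := Finset.mem_image.mp (hA'sub ha)
        refine Finset.mem_image.mpr ⟨i, ?_, hia⟩
        exact Finset.mem_filter.mpr ⟨hiR, by rwa [hia]⟩
    have himRA : (R \ A).image r = R.image r \ A' := by
      ext a
      constructor
      · intro ha
        obtain ⟨i, hiRA, hia⟩ := Finset.mem_image.mp ha
        obtain ⟨hiR, hiA⟩ := Finset.mem_sdiff.mp hiRA
        refine Finset.mem_sdiff.mpr ⟨Finset.mem_image.mpr ⟨i, hiR, hia⟩, ?_⟩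
        intro haA'
        exact hiA (Finset.mem_filter.mpr ⟨hiR, by rwa [hia]⟩)
      · intro ha
        obtain ⟨haim, haA'⟩ := Finset.mem_sdiff.mp ha
        obtain ⟨i, hiR, hia⟩ := Finset.mem_image.mp haim
        refine Finset.mem_image.mpr ⟨i, Finset.mem_sdiff.mpr ⟨hiR, ?_⟩, hia⟩
        intro hiA
        exact haA' (by rw [← hia]; exact (Finset.mem_filter.mp hiA).2)
    -- translate the GH property to the submatrix
    have hy : ∀ j : Fin (l+1), (∑ i ∈ A, B i j) - (∑ i ∈ R \ A, B i j) = -1 ∨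
        (∑ i ∈ A, B i j) - (∑ i ∈ R \ A, B i j) = 0 ∨
        (∑ i ∈ A, B i j) - (∑ i ∈ R \ A, B i j) = 1 := by
      intro j
      have h1 : ∑ i ∈ A, B i j = ∑ i' ∈ A', C i' (c j) := by
        rw [← himA, Finset.sum_image (fun a _ b _ hab => hr hab)]
        rfl
      have h2 : ∑ i ∈ R \ A, B i j = ∑ i' ∈ R.image r \ A', C i' (c j) := by
        rw [← himRA, Finset.sum_image (fun a _ b _ hab => hr hab)]
        rfl
      rw [h1, h2]
      exact hA' (c j)
    -- parity: off first column the GH vector vanishes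
    have hy0 : ∀ j : Fin (l+1), j ≠ 0 →
        (∑ i ∈ A, B i j) - (∑ i ∈ R \ A, B i j) = 0 := by
      intro j hj
      have hsplit : ∑ i ∈ R \ A, B i j + ∑ i ∈ A, B i j = ∑ i ∈ R, B i j :=
        Finset.sum_sdiff hAsub
      have hxR0 : ∑ i ∈ R, x i * B i j = 0 := by
        rw [hxR j, if_neg hj, mul_zero]
      have hdvd : (2 : ℤ) ∣ (∑ i ∈ R, B i j) - (∑ i ∈ R, x i * B i j) := by
        rw [← Finset.sum_sub_distrib]
        refine Finset.dvd_sum fun i hi => ?_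
        have hxi : x i ≠ 0 := (Finset.mem_filter.mp hi).2
        rcases hxmem i with h | h | h
        · exact ⟨B i j, by rw [h]; ring⟩
        · exact absurd h hxi
        · exact ⟨0, by rw [h]; ring⟩
      rw [hxR0, sub_zero] at hdvd
      obtain ⟨t, ht⟩ := hdvd
      have := hy j
      omega
    -- R is nonempty
    have hRne : R.Nonempty := by
      by_contra hne
      rw [Finset.not_nonempty_iff_eq_empty] at hne
      have := hxR 0
      rw [hne, Finset.sum_empty, if_pos rfl, mul_one] at this
      exact hdet this.symm
    obtain ⟨i0, hi0R⟩ := hRne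
    -- the signed indicator vector z
    set z : Fin (l+1) → ℤ := fun i => if i ∈ A then 1 else if i ∈ R then -1 else 0 with hzdef
    set y0 : ℤ := (∑ i ∈ A, B i 0) - (∑ i ∈ R \ A, B i 0) with hy0def
    have hzB : ∀ j, ∑ i, z i * B i j = y0 * (if j = 0 then 1 else 0) := by
      intro j
      have hsum : ∑ i, z i * B i j =
          (∑ i ∈ A, B i j) - (∑ i ∈ R \ A, B i j) := by
        have : ∀ i : Fin (l+1), z i * B i j =
            (if i ∈ A then B i j else 0) - (if i ∈ R \ A then B i j else 0) := by
          intro i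
          by_cases hiA : i ∈ A
          · have : i ∉ R \ A := fun h => (Finset.mem_sdiff.mp h).2 hiA
            simp [hzdef, hiA, this]
          · by_cases hiR : i ∈ R
            · simp [hzdef, hiA, hiR, Finset.mem_sdiff]
            · have : i ∉ R \ A := fun h => hiR (Finset.mem_sdiff.mp h).1
              simp [hzdef, hiA, hiR, this]
        rw [Finset.sum_congr rfl fun i _ => this i, Finset.sum_sub_distrib,
          Finset.sum_ite_mem, Finset.sum_ite_mem, Finset.univ_inter, Finset.univ_inter]
      rw [hsum]
      by_cases hj : j = 0
      · rw [hj, if_pos rfl, mul_one, hy0def]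
      · rw [if_neg hj, mul_zero, hy0 j hj]
    -- combine: det B • z - y0 • x annihilates B
    have hw : ∀ i, B.det * z i - y0 * x i = 0 := by
      refine ghouilaHouri_aux_cancel B hdet _ (fun j => ?_)
      have : ∀ i : Fin (l+1), (B.det * z i - y0 * x i) * B i j =
          B.det * (z i * B i j) - y0 * (x i * B i j) := fun i => by ring
      rw [Finset.sum_congr rfl fun i _ => this i, Finset.sum_sub_distrib,
        ← Finset.mul_sum, ← Finset.mul_sum, hzB j, hxB j]
      ring
    -- conclude at a point of R
    have hkey := hw i0
    have hxi0 : x i0 = -1 ∨ x i0 = 1 := by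
      have hne : x i0 ≠ 0 := (Finset.mem_filter.mp hi0R).2
      rcases hxmem i0 with h | h | h
      · exact Or.inl h
      · exact absurd h hne
      · exact Or.inr h
    have hzi0 : z i0 = -1 ∨ z i0 = 1 := by
      by_cases hiA : i0 ∈ A
      · right; simp [hzdef, hiA]
      · left; simp [hzdef, hiA, hi0R]
    have hy0mem : y0 = -1 ∨ y0 = 0 ∨ y0 = 1 := hy 0
    rcases hzi0 with h1 | h1 <;> rcases hxi0 with h2 | h2 <;>
      rcases hy0mem with h3 | h3 | h3 <;>
      rw [h1, h2, h3] at hkey <;> omega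
end
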